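/- Consider a mass-action chemical reaction network with N species and M reversible reactions, and suppose c^{ss} in the open positive orthant is complex-balanced, i.e., Σ_{i=1}^M ( R_i^+(c^{ss}) − R_i^-(c^{ss}) ) [ ∏_{j=1}^N (c_j/c_j^{ss})^{ν⁺_{ij}} − ∏_{j=1}^N (c_j/c_j^{ss})^{ν⁻_{ij}} ] = 0 for every c in the open positive orthant. Define the free energy φ^{ss}(c) = Σ_{j=1}^N [ c_j ln( c_j / c_j^{ss} ) − c_j + c_j^{ss} ]. Then along any differentiable solution c(t) of the chemical rate equations dc_j/dt = Σ_{i=1}^M ν_{ij} (R_i^+(c) − R_i^-(c)) taking values in the open positive orthant, one has d φ^{ss}(c(t))/dt ≤ 0. -/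

import Mathlib

/-!
With `y_j = c_j / css_j` and `x^±_i = ∏_j y_j^{ν^±_ij}` one has `R^±_i(c) = R^±_i(css) x^±_i`,
and the chain rule gives
`dφss/dt = Σ_j log y_j · dc_j/dt = Σ_i (R⁺_i(c) − R⁻_i(c)) (log x⁻_i − log x⁺_i)`.
Since `p (log q − log p) ≤ q − p`, the `i`-th summand is at most
`(R⁺_i(css) − R⁻_i(css)) (x⁻_i − x⁺_i)`, and these bounds sum to zero by complex balance.
-/

open Real Finset

theorem Real.mul_log_sub_log_le_sub {p q : ℝ} (hp : 0 < p) (hq : 0 < q) :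
    p * (log q - log p) ≤ q - p := by
  have h := log_le_sub_one_of_pos (div_pos hq hp)
  rw [log_div hq.ne' hp.ne', le_sub_iff_add_le, le_div_iff₀ hp] at h
  linarith

theorem Real.mul_sub_mul_mul_log_sub_log_le {a b p q : ℝ} (ha : 0 ≤ a) (hb : 0 ≤ b)
    (hp : 0 < p) (hq : 0 < q) :
    (a * p - b * q) * (log q - log p) ≤ (a - b) * (q - p) := by
  nlinarith [mul_le_mul_of_nonneg_left (mul_log_sub_log_le_sub hp hq) ha,
    mul_le_mul_of_nonneg_left (mul_log_sub_log_le_sub hq hp) hb]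

theorem HasDerivAt.mul_log_div_sub_add {f : ℝ → ℝ} {f' s t : ℝ} (hf : HasDerivAt f f' t)
    (hs : s ≠ 0) (ht : f t ≠ 0) :
    HasDerivAt (fun u => f u * Real.log (f u / s) - f u + s) (Real.log (f t / s) * f') t := by
  have hlog := (hf.div_const s).log (div_ne_zero ht hs)
  refine (((hf.fun_mul hlog).fun_sub hf).add_const s).congr_deriv ?_
  field_simp
  ring

section

variable {ι κ : Type*} [Fintype ι] [Fintype κ]

theorem Finset.prod_pow_eq_prod_pow_mul_prod_div_pow {K : Type*} [Field K] {s : κ → K}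
    (hs : ∀ l, s l ≠ 0) (x : κ → K) (ν : κ → ℕ) :
    ∏ l, x l ^ ν l = (∏ l, s l ^ ν l) * ∏ l, (x l / s l) ^ ν l := by
  rw [← prod_mul_distrib]
  exact prod_congr rfl fun l _ => by rw [← mul_pow, mul_div_cancel₀ _ (hs l)]

theorem Real.log_prod_pow {y : κ → ℝ} (hy : ∀ j, 0 < y j) (ν : κ → ℕ) :
    log (∏ j, y j ^ ν j) = ∑ j, ν j * log (y j) := by
  rw [log_prod fun j _ => (pow_pos (hy j) _).ne']
  exact sum_congr rfl fun j _ => log_pow _ _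

theorem Real.sum_log_mul_sum_stoich_mul_eq {y : κ → ℝ} (hy : ∀ j, 0 < y j)
    (νp νm : ι → κ → ℕ) (r : ι → ℝ) :
    ∑ j, log (y j) * ∑ i, ((νm i j : ℝ) - νp i j) * r i
      = ∑ i, r i * (log (∏ j, y j ^ νm i j) - log (∏ j, y j ^ νp i j)) := by
  simp only [log_prod_pow hy, mul_sum, ← sum_sub_distrib]
  rw [sum_comm]
  exact sum_congr rfl fun i _ => sum_congr rfl fun j _ => by ring

theorem Real.sum_mul_sub_mul_mul_log_sub_log_nonpos {a b p q : ι → ℝ}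
    (ha : ∀ i, 0 ≤ a i) (hb : ∀ i, 0 ≤ b i) (hp : ∀ i, 0 < p i) (hq : ∀ i, 0 < q i)
    (hbal : ∑ i, (a i - b i) * (p i - q i) = 0) :
    ∑ i, (a i * p i - b i * q i) * (log (q i) - log (p i)) ≤ 0 :=
  calc ∑ i, (a i * p i - b i * q i) * (log (q i) - log (p i))
      ≤ ∑ i, (a i - b i) * (q i - p i) :=
        sum_le_sum fun i _ => mul_sub_mul_mul_log_sub_log_le (ha i) (hb i) (hp i) (hq i)
    _ = -∑ i, (a i - b i) * (p i - q i) := by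
        rw [← sum_neg_distrib]
        exact sum_congr rfl fun i _ => by ring
    _ = 0 := by rw [hbal, neg_zero]

end

/-- **The free energy decreases along complex-balanced mass-action kinetics.**
For a mass-action network with rate functions `R⁺_i(c) = kp i ∏_l c_l^{νp i l}`
and `R⁻_i(c) = km i ∏_l c_l^{νm i l}`, suppose `css > 0` is complex-balanced:
`Σ_i (R⁺_i(css) − R⁻_i(css)) [ ∏_j (c_j/css_j)^{νp i j} − ∏_j (c_j/css_j)^{νm i j} ] = 0`
for every `c` in the open positive orthant.  Then the free energy
`φss(c) = Σ_j [ c_j ln(c_j/css_j) − c_j + css_j ]` is nonincreasing along any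
positive solution of the rate equations
`dc_j/dt = Σ_i (νm i j − νp i j)(R⁺_i(c) − R⁻_i(c))`:
`d φss(c(t))/dt ≤ 0`. -/
theorem free_energy_decreases_complex_balanced
    {N M : ℕ} (νp νm : Fin M → Fin N → ℕ) (kp km : Fin M → ℝ)
    (hkp : ∀ i, 0 < kp i) (hkm : ∀ i, 0 < km i)
    (css : Fin N → ℝ) (hcss : ∀ j, 0 < css j)
    (hcb : ∀ c : Fin N → ℝ, (∀ j, 0 < c j) →
      ∑ i, (kp i * ∏ l, css l ^ νp i l - km i * ∏ l, css l ^ νm i l) *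
        (∏ j, (c j / css j) ^ νp i j - ∏ j, (c j / css j) ^ νm i j) = 0)
    (c : ℝ → Fin N → ℝ) (hcpos : ∀ t j, 0 < c t j)
    (hcderiv : ∀ t j, HasDerivAt (fun u => c u j)
      (∑ i, ((νm i j : ℝ) - (νp i j : ℝ)) *
        (kp i * ∏ l, c t l ^ νp i l - km i * ∏ l, c t l ^ νm i l)) t) :
    ∀ t : ℝ, deriv (fun u => ∑ j, (c u j * Real.log (c u j / css j) - c u j + css j)) t ≤ 0 := by
  intro t
  have hy : ∀ j, 0 < c t j / css j := fun j => div_pos (hcpos t j) (hcss j)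
  have hmonomial : ∀ ν : Fin N → ℕ,
      ∏ l, c t l ^ ν l = (∏ l, css l ^ ν l) * ∏ l, (c t l / css l) ^ ν l :=
    prod_pow_eq_prod_pow_mul_prod_div_pow (fun l => (hcss l).ne') (c t)
  have hφ : HasDerivAt (fun u => ∑ j, (c u j * log (c u j / css j) - c u j + css j))
      (∑ j, log (c t j / css j) * _) t :=
    HasDerivAt.fun_sum fun j _ =>
      HasDerivAt.mul_log_div_sub_add (hcderiv t j) (hcss j).ne' (hcpos t j).ne'
  rw [hφ.deriv, sum_log_mul_sum_stoich_mul_eq hy]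
  simp only [hmonomial, ← mul_assoc]
  have hpos : ∀ ν : Fin N → ℕ, 0 < ∏ l, (c t l / css l) ^ ν l :=
    fun ν => prod_pos fun l _ => pow_pos (hy l) _
  have hrate : ∀ k : ℝ, 0 < k → ∀ ν : Fin N → ℕ, 0 ≤ k * ∏ l, css l ^ ν l :=
    fun k hk ν => (mul_pos hk (prod_pos fun l _ => pow_pos (hcss l) _)).le
  exact sum_mul_sub_mul_mul_log_sub_log_nonpos (fun i => hrate _ (hkp i) _)
    (fun i => hrate _ (hkm i) _) (fun i => hpos _) (fun i => hpos _) (hcb (c t) (hcpos t))
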